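/- For every n ≥ 3, the Möbius ladder M_n is triangle-free (for n ≥ 3, M_3 being K_{3,3}), contains a K_{3,3} subdivision (hence is non-planar), and is inseparable: it is connected, has no separating complete subgraph, no separating pair of vertices, and no separating complete subgraph suspension. -/

import Mathlib

open SimpleGraph

/-! ### Right-angled Coxeter groups -/

/-- The relators of the right-angled Coxeter group of a graph `G`: the square of each
generator, and a commuting relator `s * t * (t * s)⁻¹` for each edge of `G`. -/
def racgRels {V : Type} (G : SimpleGraph V) : Set (FreeGroup V) :=
  {r | (∃ s : V, r = FreeGroup.of s * FreeGroup.of s) ∨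
    (∃ s t : V, G.Adj s t ∧
      r = (FreeGroup.of s * FreeGroup.of t) * (FreeGroup.of t * FreeGroup.of s)⁻¹)}

/-- The right-angled Coxeter group of a graph. -/
abbrev RACG {V : Type} (G : SimpleGraph V) := PresentedGroup (racgRels G)

/-! ### The double of a graph over a vertex -/

/-- Vertices of the double of `G` over `v`: one vertex for each vertex of the link of `v`,
and a pair of vertices for each vertex outside the closed star of `v`. -/
def DoubleVert {V : Type} (G : SimpleGraph V) (v : V) : Type :=
  {u : V // G.Adj v u} ⊕ ({u : V // u ≠ v ∧ ¬ G.Adj v u} × Bool)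

namespace DoubleVert

/-- The projection of a vertex of the double to the original graph. -/
def toV {V : Type} {G : SimpleGraph V} {v : V} : DoubleVert G v → V :=
  Sum.elim Subtype.val fun p => p.1.1

/-- The copy (none for link vertices) in which a vertex of the double lives. -/
def copy {V : Type} {G : SimpleGraph V} {v : V} : DoubleVert G v → Option Bool :=
  Sum.elim (fun _ => none) fun p => some p.2

instance {V : Type} [Finite V] {G : SimpleGraph V} {v : V} : Finite (DoubleVert G v) := by
  unfold DoubleVert; infer_instance

end DoubleVert

/-- The double `D_v G` of a graph `G` over the vertex `v`: two copies of `G` minus the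
open star of `v`, glued along the link of `v`. -/
def Double {V : Type} (G : SimpleGraph V) (v : V) : SimpleGraph (DoubleVert G v) where
  Adj a b := G.Adj a.toV b.toV ∧ (a.copy = none ∨ b.copy = none ∨ a.copy = b.copy)
  symm := by
    constructor
    rintro a b ⟨h1, h2⟩
    refine ⟨h1.symm, ?_⟩
    tauto
  loopless := ⟨fun a h => G.irrefl h.1⟩

/-! ### Bundled finite graphs, doubling moves, and subdivisions -/

/-- A bundled finite simple graph. -/
structure FinGraph : Type 1 where
  V : Type
  finite : Finite V
  graph : SimpleGraph V

attribute [instance] FinGraph.finite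

/-- `H` is obtained from `G` by doubling over some vertex (up to isomorphism). -/
def DoubleMove (G H : FinGraph) : Prop :=
  ∃ v : G.V, Nonempty (H.graph ≃g Double G.graph v)

/-- `DoublingSeq n G H` : `H` is obtained from `G` by a sequence of `n` doubling moves. -/
inductive DoublingSeq : ℕ → FinGraph → FinGraph → Prop
  | refl (G : FinGraph) : DoublingSeq 0 G G
  | step {n : ℕ} {G G' G'' : FinGraph} :
      DoublingSeq n G G' → DoubleMove G' G'' → DoublingSeq (n + 1) G G''

/-- The graph obtained from `G` by subdividing the edge between `u` and `w`:
the new vertex is `none`. -/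
def subdivideEdge {V : Type} (G : SimpleGraph V) (u w : V) : SimpleGraph (Option V) where
  Adj a b :=
    match a, b with
    | some a, some b => G.Adj a b ∧ ¬(a = u ∧ b = w) ∧ ¬(a = w ∧ b = u)
    | some a, none => a = u ∨ a = w
    | none, some b => b = u ∨ b = w
    | none, none => False
  symm := by
    constructor
    rintro (_ | a) (_ | b) h
    · exact h
    · exact h
    · exact h
    · exact ⟨h.1.symm, fun hc => h.2.2 ⟨hc.2, hc.1⟩, fun hc => h.2.1 ⟨hc.2, hc.1⟩⟩
  loopless := by
    constructor
    rintro (_ | a) h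
    · exact h
    · exact G.irrefl h.1

/-- One subdivision step between bundled graphs. -/
def SubdivStep (G H : FinGraph) : Prop :=
  ∃ u w : G.V, G.graph.Adj u w ∧ Nonempty (H.graph ≃g subdivideEdge G.graph u w)

/-- `G` is obtained from `H` by a finite (possibly empty) sequence of edge subdivisions. -/
def IsSubdivisionOf (H G : FinGraph) : Prop := Relation.ReflTransGen SubdivStep H G

/-- The complete bipartite graph `K_{3,3}` as a bundled graph. -/
def K33Graph : FinGraph := ⟨Fin 3 ⊕ Fin 3, inferInstance, completeBipartiteGraph (Fin 3) (Fin 3)⟩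

/-- The complete graph `K_5` as a bundled graph. -/
def K5Graph : FinGraph := ⟨Fin 5, inferInstance, completeGraph (Fin 5)⟩

/-- The subgraph `Λ` of `G` is (isomorphic to) a subdivision of the bundled graph `H`. -/
def IsSubdivCopy (H : FinGraph) {V : Type} (G : SimpleGraph V) (Λ : G.Subgraph) : Prop :=
  ∃ H' : FinGraph, IsSubdivisionOf H H' ∧ Nonempty (H'.graph ≃g Λ.coe)

/-- `G` contains a subgraph which is a subdivision of `H`. -/
def ContainsSubdivOf (H : FinGraph) {V : Type} (G : SimpleGraph V) : Prop :=
  ∃ Λ : G.Subgraph, IsSubdivCopy H G Λ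

/-- `Λ` is a `K_{3,3}` subdivision in `G`. -/
def IsK33Sub {V : Type} (G : SimpleGraph V) (Λ : G.Subgraph) : Prop := IsSubdivCopy K33Graph G Λ

/-- `Λ` is a `K_5` subdivision in `G`. -/
def IsK5Sub {V : Type} (G : SimpleGraph V) (Λ : G.Subgraph) : Prop := IsSubdivCopy K5Graph G Λ

/-! ### Essential vertices, branches, bad edges -/

/-- The valence of `v` in the subgraph `Λ`. -/
noncomputable def essDeg {V : Type} {G : SimpleGraph V} (Λ : G.Subgraph) (v : V) : ℕ :=
  (Λ.neighborSet v).ncard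

/-- A vertex is `Λ`-essential if its valence in `Λ` is at least 3. -/
def Essential {V : Type} {G : SimpleGraph V} (Λ : G.Subgraph) (v : V) : Prop := 3 ≤ essDeg Λ v

/-- A vertex is `Λ`-non-essential if its valence in `Λ` is 2. -/
def NonEssential {V : Type} {G : SimpleGraph V} (Λ : G.Subgraph) (v : V) : Prop := essDeg Λ v = 2

/-- A branch of `Λ`: an embedded path in `Λ` between `Λ`-essential vertices whose interior
contains no `Λ`-essential vertex. -/
structure IsBranch {V : Type} {G : SimpleGraph V} (Λ : G.Subgraph) {s t : V}
    (p : G.Walk s t) : Prop where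
  isPath : p.IsPath
  pos : 0 < p.length
  mem_edges : ∀ e ∈ p.edges, e ∈ Λ.edgeSet
  ess_fst : Essential Λ s
  ess_snd : Essential Λ t
  interior : ∀ v ∈ p.support, v ≠ s → v ≠ t → ¬ Essential Λ v

/-- A bad edge of `Λ`: an edge of `G` with both endpoints in `Λ` which is not an edge of `Λ`. -/
def IsBadEdge {V : Type} (G : SimpleGraph V) (Λ : G.Subgraph) (e : Sym2 V) : Prop :=
  e ∈ G.edgeSet ∧ (∀ v ∈ e, v ∈ Λ.verts) ∧ e ∉ Λ.edgeSet

/-- The set of bad edges of `Λ`. -/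
def badEdgeSet {V : Type} (G : SimpleGraph V) (Λ : G.Subgraph) : Set (Sym2 V) :=
  {e | IsBadEdge G Λ e}

/-- `B(Λ)`, the number of bad edges of `Λ`. -/
noncomputable def badCount {V : Type} (G : SimpleGraph V) (Λ : G.Subgraph) : ℕ :=
  (badEdgeSet G Λ).ncard

/-- The number of edges of a subgraph. -/
noncomputable def numEdges {V : Type} {G : SimpleGraph V} (Λ : G.Subgraph) : ℕ :=
  Λ.edgeSet.ncard

/-- `Λ` is a `K_{3,3}` subdivision which is shortest among all `K_{3,3}` subdivisions in `G`
having at most `B(Λ)` bad edges. -/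
def ShortestK33 {V : Type} (G : SimpleGraph V) (Λ : G.Subgraph) : Prop :=
  IsK33Sub G Λ ∧ ∀ Λ₂ : G.Subgraph, IsK33Sub G Λ₂ → badCount G Λ₂ ≤ badCount G Λ →
    numEdges Λ ≤ numEdges Λ₂

/-- A vertex partition `{a,b,c}`, `{x,y,z}` for a `K_{3,3}` subdivision `Λ`: six distinct
vertices which are exactly the `Λ`-essential vertices, with a branch of `Λ` joining each of
`a, b, c` to each of `x, y, z`. -/
structure IsVertexPartition {V : Type} {G : SimpleGraph V} (Λ : G.Subgraph)
    (a b c x y z : V) : Prop where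
  nodup : ([a, b, c, x, y, z] : List V).Nodup
  ess_iff : ∀ v, Essential Λ v ↔ v ∈ ({a, b, c, x, y, z} : Set V)
  branches : ∀ s ∈ ({a, b, c} : Set V), ∀ t ∈ ({x, y, z} : Set V),
    ∃ p : G.Walk s t, IsBranch Λ p

/-- `Λ` is an induced subgraph of `G`. -/
def IsInducedSub {V : Type} (G : SimpleGraph V) (Λ : G.Subgraph) : Prop :=
  ∀ e ∈ G.edgeSet, (∀ v ∈ e, v ∈ Λ.verts) → e ∈ Λ.edgeSet

/-- The induced subgraph on `Λ` consists of `Λ` plus exactly the edges `x-y` and `y-z`. -/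
def FormTwoExtra {V : Type} (G : SimpleGraph V) (Λ : G.Subgraph) (x y z : V) : Prop :=
  badEdgeSet G Λ = {s(x, y), s(y, z)}

/-- The induced subgraph on `Λ` consists of `Λ` plus exactly the edges `x-y`, `y-z`, `a-b`,
`b-c`, and the branches `[a,y]`, `[c,y]`, `[b,x]`, `[b,z]` are single edges. -/
def FormFourExtra {V : Type} (G : SimpleGraph V) (Λ : G.Subgraph) (a b c x y z : V) : Prop :=
  badEdgeSet G Λ = {s(x, y), s(y, z), s(a, b), s(b, c)} ∧
    (∀ p : G.Walk a y, IsBranch Λ p → p.length = 1) ∧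
    (∀ p : G.Walk c y, IsBranch Λ p → p.length = 1) ∧
    (∀ p : G.Walk b x, IsBranch Λ p → p.length = 1) ∧
    (∀ p : G.Walk b z, IsBranch Λ p → p.length = 1)

/-- `Λ` is a `K_{3,3}` subdivision which is either induced, or induces one of the two special
graphs of Dani–Haulmark–Walsh. -/
def GoodK33Outcome {V : Type} (G : SimpleGraph V) (Λ : G.Subgraph) : Prop :=
  IsK33Sub G Λ ∧ (IsInducedSub G Λ ∨
    ∃ a b c x y z : V, IsVertexPartition Λ a b c x y z ∧
      (FormTwoExtra G Λ x y z ∨ FormFourExtra G Λ a b c x y z))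

/-! ### Möbius ladders and separating sets -/

/-- The Möbius ladder `M_n`, on vertex set `ZMod (2 * n)`: the cycle edges `i — i+1`
together with the rungs `i — i+n`. -/
def MobiusLadder (n : ℕ) : SimpleGraph (ZMod (2 * n)) where
  Adj i j := i ≠ j ∧ (i = j + 1 ∨ j = i + 1 ∨ i = j + (n : ZMod (2 * n)))
  symm := by
    constructor
    rintro i j ⟨hne, h⟩
    refine ⟨hne.symm, ?_⟩
    rcases h with h | h | h
    · exact Or.inr (Or.inl h)
    · exact Or.inl h
    · refine Or.inr (Or.inr ?_)
      have hnn : (n : ZMod (2 * n)) + (n : ZMod (2 * n)) = 0 := by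
        have h2 : ((2 * n : ℕ) : ZMod (2 * n)) = 0 := ZMod.natCast_self _
        push_cast at h2
        linear_combination h2
      rw [h, add_assoc, hnn, add_zero]
  loopless := ⟨fun i h => h.1 rfl⟩

/-- `S` separates `G` if deleting `S` yields a disconnected graph. -/
def Separates {V : Type} (G : SimpleGraph V) (S : Set V) : Prop :=
  ¬ (G.induce Sᶜ).Connected

/-!
Label `M_n` by `ZMod (2 * n)`, so that `i ~ j` iff `j - i ∈ {1, -1, n}`. A triangle would give
three such differences with sum `0` in `ZMod (2 * n)`; lifted to `ℤ` the sum lies in `[-3, 3n]`,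
so it is `0` or `2n`, which no choice of three of `1, -1, n` achieves when `n ≥ 3`.

The Hamiltonian cycle `0, 1, …, 2n - 1` together with the rungs at `0`, `1`, `2` is a
subdivision of `K_{3,3}` with parts `{0, 2, n + 1}` and `{1, n, n + 2}`.

In a triangle-free graph a complete subgraph has at most two vertices, and at most one if it is
joined to a further vertex. So inseparability comes down to: deleting two vertices, or a vertex
and two of its neighbours, leaves `M_n` connected. Measured from one deleted vertex, the deleted
set is `{0, d}` with `d ≤ n`, or `{0, 1, n}`, `{0, 1, -1}`, `{0, n, -1}`; the rest of the cycle
consists of at most two arcs, and a rung joins them.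
-/

namespace SimpleGraph

variable {V : Type} {G : SimpleGraph V}

lemma separates_empty_iff : Separates G ∅ ↔ ¬ G.Connected := by
  rw [Separates, Set.compl_empty, (induceUnivIso G).connected_iff]

lemma connected_induce_image_Icc (f : ℕ → V) (hf : ∀ i, G.Adj (f i) (f (i + 1))) {a b : ℕ}
    (hab : a ≤ b) : (G.induce (f '' Set.Icc a b)).Connected := by
  induction b, hab using Nat.le_induction with
  | base =>
    rw [Set.Icc_self, Set.image_singleton, induce_singleton_eq_top]
    exact connected_top
  | succ b hab ih =>
    have hIcc : Set.Icc a (b + 1) = {b + 1} ∪ Set.Icc a b := by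
      ext i; simp only [Set.mem_union, Set.mem_singleton_iff, Set.mem_Icc]; omega
    rw [hIcc, Set.image_union, Set.image_singleton]
    refine connected_induce_union (v := f (b + 1)) (w := f b) ?_ ih.preconnected rfl
      ⟨b, ⟨hab, le_rfl⟩, rfl⟩ (hf b).symm
    rw [induce_singleton_eq_top]
    exact connected_top.preconnected

lemma IsClique.subsingleton_of_forall_adj (hG : G.CliqueFree 3) {K : Set V} (hK : G.IsClique K)
    {x : V} (hx : ∀ k ∈ K, G.Adj x k) : K.Subsingleton := by
  classical
  intro a ha b hb
  by_contra hab
  exact hG {x, a, b} (is3Clique_triple_iff.2 ⟨hx a ha, hx b hb, hK ha hb hab⟩)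

lemma IsClique.eq_empty_or_eq_pair (hG : G.CliqueFree 3) {K : Set V} (hK : G.IsClique K) :
    K = ∅ ∨ ∃ a b, K = {a, b} := by
  obtain rfl | ⟨a, ha⟩ := K.eq_empty_or_nonempty
  · exact .inl rfl
  have hrest : (K \ {a}).Subsingleton :=
    (hK.subset Set.sdiff_subset).subsingleton_of_forall_adj hG fun k hk =>
      hK ha hk.1 (Ne.symm hk.2)
  refine .inr ?_
  obtain h | ⟨b, hb⟩ := hrest.eq_empty_or_singleton
  · refine ⟨a, a, ?_⟩
    rw [Set.pair_eq_singleton, ← Set.insert_eq_of_mem ha, ← Set.insert_sdiff_singleton, h,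
      LawfulSingleton.insert_empty_eq]
  · exact ⟨a, b, by rw [← Set.insert_eq_of_mem ha, ← Set.insert_sdiff_singleton, hb]⟩

end SimpleGraph

namespace ZMod

variable {m : ℕ}

lemma add_natCast_injOn_Iio (u : ZMod m) : Set.InjOn (fun i : ℕ => u + i) (Set.Iio m) := by
  intro i hi j hj h
  have h' : (i : ZMod m) = j := add_left_cancel h
  rwa [natCast_eq_natCast_iff', Nat.mod_eq_of_lt hi, Nat.mod_eq_of_lt hj] at h'

lemma natCast_add_self_eq_zero (n : ℕ) : (n : ZMod (2 * n)) + n = 0 := by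
  have h : ((2 * n : ℕ) : ZMod (2 * n)) = 0 := natCast_self _
  push_cast at h
  linear_combination h

lemma add_natCast_image_Iio [NeZero m] (u : ZMod m) :
    (fun i : ℕ => u + i) '' Set.Iio m = Set.univ :=
  Set.eq_univ_of_forall fun v =>
    ⟨(v - u).val, val_lt _, by simp only [natCast_val, cast_id', id, add_sub_cancel]⟩

lemma compl_add_natCast_image [NeZero m] (u : ZMod m) {T : Set ℕ} (hT : T ⊆ Set.Iio m) :
    ((fun i : ℕ => u + i) '' T)ᶜ = (fun i : ℕ => u + i) '' (Set.Iio m \ T) := by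
  rw [(add_natCast_injOn_Iio u).image_sdiff_subset hT, add_natCast_image_Iio,
    Set.compl_eq_univ_sdiff]

end ZMod

def IsSubdivisionGraph (H : FinGraph) {W : Type} (G : SimpleGraph W) : Prop :=
  ∃ H' : FinGraph, IsSubdivisionOf H H' ∧ Nonempty (H'.graph ≃g G)

def subdivideEdgeCongr {V W : Type} {G : SimpleGraph V} {G' : SimpleGraph W} (e : G ≃g G')
    (u w : V) : subdivideEdge G u w ≃g subdivideEdge G' (e u) (e w) where
  toEquiv := e.toEquiv.optionCongr
  map_rel_iff' := by
    rintro (_ | a) (_ | b) <;> simp [subdivideEdge, e.map_rel_iff]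

namespace IsSubdivisionGraph

variable {H : FinGraph} {W W' : Type} {G : SimpleGraph W} {G' : SimpleGraph W'}

lemma self (H : FinGraph) : IsSubdivisionGraph H H.graph := ⟨H, .refl, ⟨.refl⟩⟩

lemma of_iso (h : IsSubdivisionGraph H G) (e : G ≃g G') : IsSubdivisionGraph H G' := by
  obtain ⟨H', hH', ⟨f⟩⟩ := h
  exact ⟨H', hH', ⟨f.trans e⟩⟩

lemma subdivideEdge (h : IsSubdivisionGraph H G) {u w : W} (huw : G.Adj u w) :
    IsSubdivisionGraph H (subdivideEdge G u w) := by
  obtain ⟨H', hH', ⟨f⟩⟩ := h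
  have : Finite W := .of_equiv H'.V f.toEquiv
  refine ⟨⟨Option W, inferInstance, _root_.subdivideEdge G u w⟩, hH'.tail ?_, ⟨.refl⟩⟩
  exact ⟨f.symm u, f.symm w, f.symm.map_adj_iff.2 huw, ⟨subdivideEdgeCongr f.symm u w⟩⟩

lemma containsSubdivOf {M : SimpleGraph W'} (h : IsSubdivisionGraph H G) (hG : G ⊑ M) :
    ContainsSubdivOf H M := by
  obtain ⟨H', hH', ⟨f⟩⟩ := h
  obtain ⟨c⟩ := hG
  exact ⟨c.toSubgraph, H', hH', ⟨f.trans c.isoToSubgraph⟩⟩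

end IsSubdivisionGraph

def subdivideEdgeIsoOfSuccAbove {N : ℕ} {G : SimpleGraph (Fin N)}
    {G' : SimpleGraph (Fin (N + 1))} (p : Fin (N + 1)) (u w : Fin N)
    (hsome : ∀ i j, G'.Adj (p.succAbove i) (p.succAbove j) ↔
      G.Adj i j ∧ ¬(i = u ∧ j = w) ∧ ¬(i = w ∧ j = u))
    (hnone : ∀ i, G'.Adj (p.succAbove i) p ↔ i = u ∨ i = w) :
    subdivideEdge G u w ≃g G' where
  toEquiv := (finSuccEquiv' p).symm
  map_rel_iff' := by
    rintro (_ | i) (_ | j) <;>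
      simp only [finSuccEquiv'_symm_none, finSuccEquiv'_symm_some, hsome, hnone,
        G'.adj_comm p, G'.irrefl]
    all_goals rfl

lemma Fin.val_succAbove_eq_ite {N : ℕ} (p : Fin (N + 1)) (i : Fin N) :
    (p.succAbove i : ℕ) = if (i : ℕ) < p then (i : ℕ) else (i : ℕ) + 1 := by
  simp only [Fin.succAbove, Fin.lt_def, Fin.val_castSucc]
  split_ifs <;> simp

def k33PatternRel (k m a b : ℕ) : Prop :=
  b = a + 1 ∨ (a = 0 ∧ b = m + 5) ∨ (a = 0 ∧ b = k + 3) ∨ (a = 1 ∧ b = k + 4) ∨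
    (a = 2 ∧ b = k + 5)

/-- For `k ≤ m`: the cycle `0, 1, …, m + 5` with the chords `0 — k + 3`, `1 — k + 4`,
`2 — k + 5`, i.e. `K_{3,3}` with parts `{0, 2, k + 4}`, `{1, k + 3, k + 5}` whose edge
`2 — k + 3` is subdivided `k` times and whose edge `k + 5 — 0` is subdivided `m - k` times. -/
def k33Pattern (k m : ℕ) : SimpleGraph (Fin (m + 6)) :=
  SimpleGraph.fromRel fun i j => k33PatternRel k m i j

lemma k33Pattern_adj {k m : ℕ} {i j : Fin (m + 6)} :
    (k33Pattern k m).Adj i j ↔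
      (i : ℕ) ≠ j ∧ (k33PatternRel k m i j ∨ k33PatternRel k m j i) := by
  rw [k33Pattern, fromRel_adj, Ne, Fin.ext_iff]

def k33PatternIsoBase : K33Graph.graph ≃g k33Pattern 0 0 where
  toFun := Sum.elim (fun i => ⟨2 * i, by omega⟩) fun j => ⟨2 * j + 1, by omega⟩
  invFun x := if x.val % 2 = 0 then .inl ⟨x / 2, by omega⟩ else .inr ⟨x / 2, by omega⟩
  left_inv := by rintro (i | i) <;> fin_cases i <;> rfl
  right_inv := by intro x; fin_cases x <;> rfl
  map_rel_iff' := by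
    rintro (a | a) (b | b) <;>
      simp only [K33Graph, k33Pattern_adj, k33PatternRel, completeBipartiteGraph_adj] <;>
      revert a b <;> decide

def k33PatternIsoSubdivideMiddle {k m : ℕ} (hkm : k ≤ m) :
    subdivideEdge (k33Pattern k m) ⟨k + 2, by omega⟩ ⟨k + 3, by omega⟩ ≃g
      k33Pattern (k + 1) (m + 1) :=
  subdivideEdgeIsoOfSuccAbove ⟨k + 3, by omega⟩ _ _
    (fun i j => by
      simp only [k33Pattern_adj, k33PatternRel, Fin.ext_iff, Fin.val_succAbove_eq_ite]
      grind (splits := 40))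
    (fun i => by
      simp only [k33Pattern_adj, k33PatternRel, Fin.val_succAbove_eq_ite]
      grind)

def k33PatternIsoSubdivideLast {k m : ℕ} (hkm : k ≤ m) :
    subdivideEdge (k33Pattern k m) ⟨m + 5, by omega⟩ 0 ≃g k33Pattern k (m + 1) :=
  subdivideEdgeIsoOfSuccAbove (Fin.last _) _ _
    (fun i j => by
      simp only [k33Pattern_adj, k33PatternRel, Fin.ext_iff, Fin.val_succAbove_eq_ite]
      grind (splits := 40))
    (fun i => by
      simp only [k33Pattern_adj, k33PatternRel, Fin.ext_iff, Fin.val_succAbove_eq_ite]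
      grind)

lemma isSubdivisionGraph_k33Pattern : ∀ {k m : ℕ}, k ≤ m →
    IsSubdivisionGraph K33Graph (k33Pattern k m)
  | 0, 0, _ => (IsSubdivisionGraph.self K33Graph).of_iso k33PatternIsoBase
  | 0, m + 1, _ =>
    ((isSubdivisionGraph_k33Pattern m.zero_le).subdivideEdge
      (by simp [k33Pattern_adj, k33PatternRel])).of_iso (k33PatternIsoSubdivideLast m.zero_le)
  | k + 1, m + 1, hkm =>
    ((isSubdivisionGraph_k33Pattern (Nat.le_of_succ_le_succ hkm)).subdivideEdge
      (by simp [k33Pattern_adj, k33PatternRel])).of_iso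
      (k33PatternIsoSubdivideMiddle (Nat.le_of_succ_le_succ hkm))

namespace MobiusLadder

variable {n : ℕ}

lemma adj_iff {i j : ZMod (2 * n)} :
    (MobiusLadder n).Adj i j ↔ i ≠ j ∧ (j - i = 1 ∨ j - i = -1 ∨ j - i = n) := by
  refine and_congr_right fun _ => ?_
  have h2n := ZMod.natCast_add_self_eq_zero n
  constructor
  · rintro (h | h | h)
    · exact .inr (.inl (by linear_combination -h))
    · exact .inl (by linear_combination h)
    · exact .inr (.inr (by linear_combination -h - h2n))
  · rintro (h | h | h)
    · exact .inr (.inl (by linear_combination h))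
    · exact .inl (by linear_combination -h)
    · exact .inr (.inr (by linear_combination -h - h2n))

lemma adj_add_one (v : ZMod (2 * n)) : (MobiusLadder n).Adj v (v + 1) := by
  refine adj_iff.2 ⟨fun h => ?_, .inl (add_sub_cancel_left v 1)⟩
  have h1 : ((1 : ℕ) : ZMod (2 * n)) = 0 := by
    rw [Nat.cast_one]; linear_combination -h
  have := Nat.dvd_one.1 ((ZMod.natCast_eq_zero_iff _ _).1 h1)
  omega

lemma adj_add_natCast_self (hn : 0 < n) (v : ZMod (2 * n)) :
    (MobiusLadder n).Adj v (v + n) := by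
  refine adj_iff.2 ⟨fun h => ?_, .inr (.inr (add_sub_cancel_left v _))⟩
  have hz : (n : ZMod (2 * n)) = 0 := by linear_combination -h
  have := Nat.le_of_dvd hn ((ZMod.natCast_eq_zero_iff _ _).1 hz)
  omega

lemma exists_int_of_adj {i j : ZMod (2 * n)} (h : (MobiusLadder n).Adj i j) :
    ∃ e : ℤ, (e = 1 ∨ e = -1 ∨ e = n) ∧ j - i = e := by
  obtain ⟨-, h | h | h⟩ := adj_iff.1 h
  · exact ⟨1, .inl rfl, by rw [h, Int.cast_one]⟩
  · exact ⟨-1, .inr (.inl rfl), by rw [h, Int.cast_neg, Int.cast_one]⟩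
  · exact ⟨n, .inr (.inr rfl), by rw [h, Int.cast_natCast]⟩

lemma cliqueFree_three (hn : 3 ≤ n) : (MobiusLadder n).CliqueFree 3 := by
  intro t ht
  obtain ⟨a, b, c, hab, hac, hbc, -⟩ := is3Clique_iff.1 ht
  obtain ⟨e₁, he₁, h₁⟩ := exists_int_of_adj hab
  obtain ⟨e₂, he₂, h₂⟩ := exists_int_of_adj hbc
  obtain ⟨e₃, he₃, h₃⟩ := exists_int_of_adj hac.symm
  obtain ⟨q, hq⟩ : (2 * n : ℤ) ∣ e₁ + e₂ + e₃ := by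
    have := (ZMod.intCast_zmod_eq_zero_iff_dvd (e₁ + e₂ + e₃) (2 * n)).1
      (by push_cast; rw [← h₁, ← h₂, ← h₃]; ring)
    exact_mod_cast this
  have hn' : (3 : ℤ) ≤ n := by exact_mod_cast hn
  obtain ⟨hlow, hupp⟩ : -3 ≤ 2 * n * q ∧ 2 * n * q ≤ 3 * n := by omega
  obtain rfl | rfl : q = 0 ∨ q = 1 := by
    have : 0 ≤ q := by nlinarith
    have : q ≤ 1 := by nlinarith
    omega
  all_goals omega

lemma exists_eq_add_of_adj (hn : 0 < n) {k v : ZMod (2 * n)} (h : (MobiusLadder n).Adj k v) :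
    ∃ a ∈ ({1, n, 2 * n - 1} : Set ℕ), v = k + a := by
  obtain ⟨-, h | h | h⟩ := adj_iff.1 h
  · exact ⟨1, by simp, by rw [Nat.cast_one]; linear_combination h⟩
  · refine ⟨2 * n - 1, by simp, ?_⟩
    rw [Nat.cast_sub (by omega), Nat.cast_mul, Nat.cast_ofNat, Nat.cast_one]
    have : ((2 * n : ℕ) : ZMod (2 * n)) = 0 := ZMod.natCast_self _
    push_cast at this
    linear_combination h - this
  · exact ⟨n, by simp, by linear_combination h⟩

lemma connected_induce_arc (u : ZMod (2 * n)) {a b : ℕ} (hab : a ≤ b) :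
    ((MobiusLadder n).induce ((fun i : ℕ => u + i) '' Set.Icc a b)).Connected :=
  connected_induce_image_Icc _
    (fun i => by simpa [add_assoc] using adj_add_one (u + (i : ZMod (2 * n)))) hab

lemma connected_induce_two_arcs (hn : 0 < n) (u : ZMod (2 * n)) {a b c d r : ℕ} (hab : a ≤ b)
    (hcd : c ≤ d) (hr : r ∈ Set.Icc a b) (hrn : r + n ∈ Set.Icc c d) :
    ((MobiusLadder n).induce
      ((fun i : ℕ => u + i) '' (Set.Icc a b ∪ Set.Icc c d))).Connected := by
  rw [Set.image_union]
  refine connected_induce_union (connected_induce_arc u hab).preconnected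
    (connected_induce_arc u hcd).preconnected (Set.mem_image_of_mem _ hr)
    (Set.mem_image_of_mem _ hrn) ?_
  simpa [add_assoc] using adj_add_natCast_self hn (u + r)

lemma not_separates_image_of_connected (hn : 0 < n) (u : ZMod (2 * n)) {T : Set ℕ}
    (hT : T ⊆ Set.Iio (2 * n))
    (h : ((MobiusLadder n).induce ((fun i : ℕ => u + i) '' (Set.Iio (2 * n) \ T))).Connected) :
    ¬ Separates (MobiusLadder n) ((fun i : ℕ => u + i) '' T) := by
  have : NeZero (2 * n) := ⟨by omega⟩
  rw [Separates, not_not, ZMod.compl_add_natCast_image u hT]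
  exact h

lemma connected (hn : 0 < n) : (MobiusLadder n).Connected := by
  have : NeZero (2 * n) := ⟨by omega⟩
  rw [← (induceUnivIso _).connected_iff, ← ZMod.add_natCast_image_Iio 0,
    show Set.Iio (2 * n) = Set.Icc 0 (2 * n - 1) by ext; simp; omega]
  exact connected_induce_arc 0 (Nat.zero_le _)

lemma not_separates_pair_of_val_le (hn : 3 ≤ n) (u w : ZMod (2 * n)) (hd : (w - u).val ≤ n) :
    ¬ Separates (MobiusLadder n) {u, w} := by
  have : NeZero (2 * n) := ⟨by omega⟩
  set d := (w - u).val
  have hpair : ({u, w} : Set (ZMod (2 * n))) = (fun i : ℕ => u + i) '' {0, d} := by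
    simp [Set.image_pair, d, ZMod.natCast_val, ZMod.cast_id']
  rw [hpair]
  refine not_separates_image_of_connected (by omega) u
    (by simp [Set.insert_subset_iff, d, ZMod.val_lt]; omega) ?_
  rcases le_or_gt d 1 with hd1 | hd1
  · rw [show Set.Iio (2 * n) \ {0, d} = Set.Icc (d + 1) (2 * n - 1) by ext; simp; omega]
    exact connected_induce_arc u (by omega)
  · rw [show Set.Iio (2 * n) \ {0, d} = Set.Icc 1 (d - 1) ∪ Set.Icc (d + 1) (2 * n - 1) by
      ext; simp; omega]
    exact connected_induce_two_arcs (r := 1) (by omega) u (by omega) (by omega)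
      (by simp; omega) (by simp; omega)

lemma not_separates_pair (hn : 3 ≤ n) (u w : ZMod (2 * n)) :
    ¬ Separates (MobiusLadder n) {u, w} := by
  have : NeZero (2 * n) := ⟨by omega⟩
  rcases le_or_gt (w - u).val n with hd | hd
  · exact not_separates_pair_of_val_le hn u w hd
  · rw [Set.pair_comm]
    refine not_separates_pair_of_val_le hn w u ?_
    have hne : w - u ≠ 0 := fun h => by simp [h] at hd
    rw [← neg_sub, ZMod.neg_val, if_neg hne]
    omega

lemma not_separates_vertex_and_two_neighbors_of_lt (hn : 3 ≤ n) (k : ZMod (2 * n)) {a b : ℕ}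
    (ha : a ∈ ({1, n, 2 * n - 1} : Set ℕ)) (hb : b ∈ ({1, n, 2 * n - 1} : Set ℕ))
    (hab : a < b) :
    ¬ Separates (MobiusLadder n) {k, k + (a : ZMod (2 * n)), k + (b : ZMod (2 * n))} := by
  have htriple : ({k, k + (a : ZMod (2 * n)), k + (b : ZMod (2 * n))} : Set (ZMod (2 * n))) =
      (fun i : ℕ => k + i) '' {0, a, b} := by
    simp [Set.image_insert_eq]
  rw [htriple]
  simp only [Set.mem_insert_iff, Set.mem_singleton_iff] at ha hb
  refine not_separates_image_of_connected (by omega) k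
    (by simp [Set.insert_subset_iff]; omega) ?_
  obtain ⟨rfl, hb⟩ | ⟨rfl, rfl⟩ | ⟨ha, rfl⟩ :
      a = 1 ∧ b = n ∨ a = 1 ∧ b = 2 * n - 1 ∨ a = n ∧ b = 2 * n - 1 := by omega
  · rw [hb, show Set.Iio (2 * n) \ {0, 1, n} = Set.Icc 2 (n - 1) ∪ Set.Icc (n + 1) (2 * n - 1)
      by ext; simp; omega]
    exact connected_induce_two_arcs (r := 2) (by omega) k (by omega) (by omega)
      (by simp; omega) (by simp; omega)
  · rw [show Set.Iio (2 * n) \ {0, 1, 2 * n - 1} = Set.Icc 2 (2 * n - 2) by ext; simp; omega]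
    exact connected_induce_arc k (by omega)
  · rw [ha, show Set.Iio (2 * n) \ {0, n, 2 * n - 1} =
      Set.Icc 1 (n - 1) ∪ Set.Icc (n + 1) (2 * n - 2) by ext; simp; omega]
    exact connected_induce_two_arcs (r := 1) (by omega) k (by omega) (by omega)
      (by simp; omega) (by simp; omega)

lemma not_separates_vertex_and_two_neighbors (hn : 3 ≤ n) {k u w : ZMod (2 * n)}
    (hu : (MobiusLadder n).Adj k u) (hw : (MobiusLadder n).Adj k w) (huw : u ≠ w) :
    ¬ Separates (MobiusLadder n) {k, u, w} := by
  obtain ⟨a, ha, rfl⟩ := exists_eq_add_of_adj (by omega) hu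
  obtain ⟨b, hb, rfl⟩ := exists_eq_add_of_adj (by omega) hw
  rcases lt_or_gt_of_ne (fun h : a = b => huw (by rw [h])) with hab | hab
  · exact not_separates_vertex_and_two_neighbors_of_lt hn k ha hb hab
  · rw [Set.pair_comm (k + (a : ZMod (2 * n)))]
    exact not_separates_vertex_and_two_neighbors_of_lt hn k hb ha hab

def k33PatternCopy (hn : 3 ≤ n) : Copy (k33Pattern (n - 3) (2 * n - 6)) (MobiusLadder n) where
  toHom := ⟨fun i => (i : ℕ), fun {i j} h => by
    suffices H : ∀ i j : Fin (2 * n - 6 + 6), k33PatternRel (n - 3) (2 * n - 6) i j →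
        (MobiusLadder n).Adj (i : ℕ) (j : ℕ) by
      obtain ⟨-, h | h⟩ := fromRel_adj _ _ _ |>.1 h
      exacts [H i j h, (H j i h).symm]
    intro i j h
    rcases h with h | ⟨hi, hj⟩ | ⟨hi, hj⟩ | ⟨hi, hj⟩ | ⟨hi, hj⟩
    · rw [h, Nat.cast_succ]
      exact adj_add_one _
    · have hwrap : ((i : ℕ) : ZMod (2 * n)) = (j : ℕ) + 1 := by
        rw [hi, hj, ← Nat.cast_add_one, show 2 * n - 6 + 5 + 1 = 2 * n by omega,
          ZMod.natCast_self, Nat.cast_zero]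
      rw [hwrap]
      exact (adj_add_one _).symm
    all_goals
      rw [show (j : ℕ) = i + n by omega, Nat.cast_add]
      exact adj_add_natCast_self (by omega) _⟩
  injective' i j h := by
    change ((i : ℕ) : ZMod (2 * n)) = (j : ℕ) at h
    have := congrArg ZMod.val h
    rwa [ZMod.val_cast_of_lt (by omega), ZMod.val_cast_of_lt (by omega), ← Fin.ext_iff] at this

lemma containsSubdivOf_K33Graph (hn : 3 ≤ n) : ContainsSubdivOf K33Graph (MobiusLadder n) :=
  (isSubdivisionGraph_k33Pattern (by omega)).containsSubdivOf ⟨k33PatternCopy hn⟩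

end MobiusLadder

/-- for every `n ≥ 3`, the Möbius ladder `M_n` is triangle-free, contains a
`K_{3,3}` subdivision, and is inseparable: it is connected, no vertex set of a complete
subgraph separates it, no pair of vertices separates it, and no vertex set of a complete
subgraph suspension separates it. -/
theorem mobiusLadder_triangle_free_nonplanar_inseparable (n : ℕ) (hn : 3 ≤ n) :
    (MobiusLadder n).CliqueFree 3 ∧
    ContainsSubdivOf K33Graph (MobiusLadder n) ∧
    (MobiusLadder n).Connected ∧
    (∀ K : Set (ZMod (2 * n)), (MobiusLadder n).IsClique K →
      ¬ Separates (MobiusLadder n) K) ∧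
    (∀ u w : ZMod (2 * n), u ≠ w → ¬ Separates (MobiusLadder n) {u, w}) ∧
    (∀ (K : Set (ZMod (2 * n))) (u w : ZMod (2 * n)), (MobiusLadder n).IsClique K →
      u ≠ w → ¬ (MobiusLadder n).Adj u w → u ∉ K → w ∉ K →
      (∀ k ∈ K, (MobiusLadder n).Adj u k ∧ (MobiusLadder n).Adj w k) →
      ¬ Separates (MobiusLadder n) (K ∪ {u, w})) := by
  have htri := MobiusLadder.cliqueFree_three hn
  refine ⟨htri, MobiusLadder.containsSubdivOf_K33Graph hn, MobiusLadder.connected (by omega),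
    fun K hK => ?_, fun u w _ => MobiusLadder.not_separates_pair hn u w,
    fun K u w hK huw _ _ _ hadj => ?_⟩
  · obtain rfl | ⟨a, b, rfl⟩ := hK.eq_empty_or_eq_pair htri
    · rw [separates_empty_iff, not_not]
      exact MobiusLadder.connected (by omega)
    · exact MobiusLadder.not_separates_pair hn a b
  · obtain rfl | ⟨k, rfl⟩ :=
      (hK.subsingleton_of_forall_adj htri fun k hk => (hadj k hk).1).eq_empty_or_singleton
    · rw [Set.empty_union]
      exact MobiusLadder.not_separates_pair hn u w
    · rw [Set.singleton_union]
      exact MobiusLadder.not_separates_vertex_and_two_neighbors hn (hadj k rfl).1.symm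
        (hadj k rfl).2.symm huw
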